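/- arXiv:1303.7256 — 2 statements merged into one kernel-verified Lean document; each statement's English description precedes it below -/
import Mathlib

section
/- Let c > 0 be fixed. Then, as α → 0⁺, ∑_{p∈ℤ} p·e^{-αp² + 2cp} is asymptotic to (c/α)·√(π/α)·e^{c²/α}; precisely, lim_{α→0⁺} (α^{3/2}/(c√π))·e^{-c²/α} · ∑_{p∈ℤ} p·e^{-αp² + 2cp} = 1. -/
/-!
The sum is `θ'(z, τ) / (2πi)` at `z = -ic/π`, `τ = iα/π`, where `θ'` is the `z`-derivative of the
Jacobi theta function `θ(z, τ) = ∑ₙ exp (2πinz + πin²τ)`. The functional equation of `θ'` (Poisson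
summation) rewrites it exactly as `(√(π/α) e^{c²/α} / α) · (c θ(w, τ') - θ'(w, τ') / 2)` with
`w = -c/α` real and `τ' = iπ/α`. For real `w` the `n`-th terms of `θ(w, τ')` and `θ'(w, τ')` have
modulus `e^{-πn² Im τ'}` and `2π|n| e^{-πn² Im τ'}`, so as `Im τ' = π/α → ∞` dominated convergence
gives `θ(w, τ') → 1` and `θ'(w, τ') → 0`.
-/

open Filter Topology Complex Real

section JacobiThetaRealArgument

variable {ι : Type*} {l : Filter ι} {x : ι → ℝ} {τ : ι → ℂ}

lemma tendsto_jacobiTheta₂_term_ofReal (hτ : Tendsto (fun i ↦ (τ i).im) l atTop) (n : ℤ) :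
    Tendsto (fun i ↦ jacobiTheta₂_term n (x i) (τ i)) l (𝓝 (if n = 0 then 1 else 0)) := by
  split_ifs with hn
  · simpa [jacobiTheta₂_term, hn] using tendsto_const_nhds
  rw [tendsto_zero_iff_norm_tendsto_zero]
  simp only [norm_jacobiTheta₂_term, ofReal_im, mul_zero, sub_zero]
  refine tendsto_exp_atBot.comp (hτ.const_mul_atTop_of_neg ?_)
  have : (0 : ℝ) < n ^ 2 := by positivity
  nlinarith [pi_pos]

lemma tendsto_jacobiTheta₂_ofReal (hτ : Tendsto (fun i ↦ (τ i).im) l atTop) :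
    Tendsto (fun i ↦ jacobiTheta₂ (x i) (τ i)) l (𝓝 1) := by
  have h := tendsto_tsum_of_dominated_convergence
    (summable_pow_mul_jacobiTheta₂_term_bound 0 one_pos 0)
    (tendsto_jacobiTheta₂_term_ofReal (x := x) hτ) ?_
  · rwa [tsum_ite_eq] at h
  filter_upwards [hτ.eventually_ge_atTop 1] with i hi n
  simpa using norm_jacobiTheta₂_term_le one_pos (by simp : |(x i : ℂ).im| ≤ 0) hi n

lemma tendsto_jacobiTheta₂'_ofReal (hτ : Tendsto (fun i ↦ (τ i).im) l atTop) :
    Tendsto (fun i ↦ jacobiTheta₂' (x i) (τ i)) l (𝓝 0) := by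
  have h := tendsto_tsum_of_dominated_convergence (f := fun i n ↦ jacobiTheta₂'_term n (x i) (τ i))
    ((summable_pow_mul_jacobiTheta₂_term_bound 0 one_pos 1).mul_left (2 * π))
    (fun n ↦ (tendsto_jacobiTheta₂_term_ofReal hτ n).const_mul (2 * π * I * n)) ?_
  · simpa [jacobiTheta₂'] using h
  filter_upwards [hτ.eventually_ge_atTop 1] with i hi n
  simpa [mul_assoc] using norm_jacobiTheta₂'_term_le one_pos (by simp : |(x i : ℂ).im| ≤ 0) hi n

end JacobiThetaRealArgument

lemma ofReal_tsum_int_mul_exp_eq_jacobiTheta₂' (α c : ℝ) :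
    ((∑' p : ℤ, (p : ℝ) * rexp (-α * p ^ 2 + 2 * c * p) : ℝ) : ℂ) =
      jacobiTheta₂' (-I * (c / π : ℝ)) (I * (α / π : ℝ)) / (2 * π * I) := by
  rw [ofReal_tsum, jacobiTheta₂', ← tsum_div_const]
  congr 1 with p
  rw [jacobiTheta₂'_term, jacobiTheta₂_term]
  push_cast
  field_simp
  congr 2
  ring_nf
  rw [I_sq]
  ring

lemma ofReal_tsum_int_mul_exp_eq_jacobiTheta₂ {α : ℝ} (hα : 0 < α) (c : ℝ) :
    ((∑' p : ℤ, (p : ℝ) * rexp (-α * p ^ 2 + 2 * c * p) : ℝ) : ℂ) =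
      (√(π / α) * rexp (c ^ 2 / α) / α : ℝ) *
        (c * jacobiTheta₂ (-c / α : ℝ) (I * (π / α : ℝ)) -
          jacobiTheta₂' (-c / α : ℝ) (I * (π / α : ℝ)) / 2) := by
  have hα' : (α : ℂ) ≠ 0 := ofReal_ne_zero.mpr hα.ne'
  have hroot : (-I * (I * (α / π : ℝ))) ^ (1 / 2 : ℂ) = (√(α / π) : ℝ) := by
    rw [← mul_assoc, neg_mul, I_mul_I, neg_neg, one_mul, sqrt_eq_rpow,
      ofReal_cpow (by positivity)]
    norm_num
  have hz : -I * (c / π : ℝ) / (I * (α / π : ℝ)) = (-c / α : ℝ) := by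
    push_cast; field_simp
  have hτ : -1 / (I * (α / π : ℝ)) = I * (π / α : ℝ) := by
    push_cast; field_simp; rw [I_sq]
  have hexp : -π * I * (-I * (c / π : ℝ)) ^ 2 / (I * (α / π : ℝ)) = (c ^ 2 / α : ℝ) := by
    push_cast; field_simp; ring_nf; rw [I_sq]; ring
  rw [ofReal_tsum_int_mul_exp_eq_jacobiTheta₂', jacobiTheta₂'_functional_equation, hroot, hz, hτ,
    hexp, sqrt_div' _ hα.le, sqrt_div' _ pi_pos.le]
  push_cast
  field_simp
  ring_nf
  rw [I_sq]
  ring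

lemma rpow_three_halves_div_mul_exp_mul_sqrt_mul_exp {α : ℝ} (hα : 0 < α) (c : ℝ) :
    α ^ ((3 : ℝ) / 2) / (c * √π) * rexp (-c ^ 2 / α) * (√(π / α) * rexp (c ^ 2 / α) / α) =
      c⁻¹ := by
  have hsqrt : α ^ ((3 : ℝ) / 2) = α * √α := by
    rw [show (3 : ℝ) / 2 = 1 + 1 / 2 by norm_num, rpow_add hα, rpow_one, sqrt_eq_rpow]
  have hexp : rexp (-(c ^ 2 / α)) * rexp (c ^ 2 / α) = 1 := by
    rw [← Real.exp_add, neg_add_cancel, Real.exp_zero]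
  calc α ^ ((3 : ℝ) / 2) / (c * √π) * rexp (-c ^ 2 / α) * (√(π / α) * rexp (c ^ 2 / α) / α)
      = α * √α / √π * (√π / √α) / α * (rexp (-(c ^ 2 / α)) * rexp (c ^ 2 / α)) * c⁻¹ := by
        rw [hsqrt, sqrt_div' _ hα.le, neg_div]; ring
    _ = c⁻¹ := by rw [hexp]; field_simp

/-- For fixed `c > 0`, as `α → 0⁺`,
`∑_{p ∈ ℤ} p · e^{-αp² + 2cp} ~ (c/α)·√(π/α)·e^{c²/α}`, i.e.
`(α^{3/2}/(c√π))·e^{-c²/α} · ∑_{p ∈ ℤ} p·e^{-αp²+2cp} → 1`. -/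
theorem stmt1 (c : ℝ) (hc : 0 < c) :
    Tendsto (fun α : ℝ =>
      α ^ ((3 : ℝ) / 2) / (c * Real.sqrt Real.pi) * Real.exp (-(c ^ 2) / α) *
        ∑' p : ℤ, (p : ℝ) * Real.exp (-α * (p : ℝ) ^ 2 + 2 * c * (p : ℝ)))
      (nhdsWithin 0 (Set.Ioi 0)) (nhds 1) := by
  have hτ : Tendsto (fun α : ℝ ↦ (I * (π / α : ℝ)).im) (𝓝[>] 0) atTop := by
    simpa only [I_mul_im, ofReal_re, div_eq_mul_inv] using
      tendsto_inv_nhdsGT_zero.const_mul_atTop pi_pos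
  have hθ := (tendsto_jacobiTheta₂_ofReal (x := fun α ↦ -c / α) hτ).const_mul (c : ℂ)
  have hθ' := (tendsto_jacobiTheta₂'_ofReal (x := fun α ↦ -c / α) hτ).div_const 2
  have hlim := (hθ.sub hθ').div_const (c : ℂ)
  rw [mul_one, zero_div, sub_zero, div_self (ofReal_ne_zero.mpr hc.ne')] at hlim
  rw [← tendsto_ofReal_iff, ofReal_one]
  refine hlim.congr' ?_
  filter_upwards [self_mem_nhdsWithin] with α (hα : 0 < α)
  rw [ofReal_mul, ofReal_tsum_int_mul_exp_eq_jacobiTheta₂ hα, ← mul_assoc, ← ofReal_mul,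
    rpow_three_halves_div_mul_exp_mul_sqrt_mul_exp hα, ofReal_inv, div_eq_inv_mul]
end

section
/- For p = (p₁,p₂,p₃,p₄) ∈ ℤ⁴ write |p|² = p₁²+p₂²+p₃²+p₄², σ(p) = p₁+p₂+p₃+p₄, and τ(p) = ∑_{1≤i<j≤4} p_i p_j. Then lim_{α→0⁺} α³ · ∑_{p∈ℤ⁴} τ(p) · e^{-α(|p|² + σ(p)²)} = −3π²/(5√5). -/
/-!
Writing `F(x) = τ(x) e^{-Q(x)}` with `Q(x) = |x|² + σ(x)²`, homogeneity of `τ` and `Q` gives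
`α³ ∑_p τ(p) e^{-αQ(p)} = h⁴ ∑_p F(h p)` for `h = √α`: a Riemann sum of `F` over the lattice
`h ℤ⁴`. Since `F` is continuous with Gaussian decay, dominated convergence applied to the step
functions `x ↦ F(h ⌊x / h⌋)` shows that it tends to `∫ F`. In the orthonormal coordinates
`x = H y`, `H` the normalised Hadamard matrix, one has `σ(x) = 2 y₀`, so
`Q = 5 y₀² + y₁² + y₂² + y₃²` and `τ = (4 y₀² - |y|²) / 2`, and `∫ F` reduces to the
one-dimensional moments `∫ t² e^{-b t²} = √(π / b) / (2 b)`.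
-/

open Filter Function MeasureTheory Real Set Topology
open scoped Matrix

lemma integrable_sq_mul_exp_neg_mul_sq {b : ℝ} (hb : 0 < b) :
    Integrable fun x : ℝ => x ^ 2 * exp (-b * x ^ 2) := by
  simpa only [rpow_two] using integrable_rpow_mul_exp_neg_mul_sq hb (s := 2) (by norm_num)

lemma integral_sq_mul_exp_neg_mul_sq {b : ℝ} (hb : 0 < b) :
    ∫ x : ℝ, x ^ 2 * exp (-b * x ^ 2) = √(π / b) / (2 * b) := by
  have heven : (fun x : ℝ => x ^ 2 * exp (-b * x ^ 2)) =
      fun x => |x| ^ (2 : ℝ) * exp (-b * |x| ^ (2 : ℝ)) := by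
    ext x; simp only [rpow_two, sq_abs]
  rw [heven, integral_comp_abs (f := fun t => t ^ (2 : ℝ) * exp (-b * t ^ (2 : ℝ))),
    integral_rpow_mul_exp_neg_mul_rpow two_pos (by norm_num) hb,
    show ((2 : ℝ) + 1) / 2 = 1 / 2 + 1 by norm_num, Gamma_add_one (by norm_num),
    Gamma_one_half_eq, show -((2 : ℝ) + 1) / 2 = -1 - 1 / 2 by norm_num,
    rpow_sub hb, rpow_neg_one, ← sqrt_eq_rpow, sqrt_div' _ hb.le]
  field_simp

section Weighted

variable {ι : Type*} [Fintype ι] {c : ι → ℝ}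

lemma exp_neg_sum_mul_sq (c y : ι → ℝ) :
    exp (-∑ i, c i * y i ^ 2) = ∏ i, exp (-c i * y i ^ 2) := by
  simp only [← exp_sum, ← Finset.sum_neg_distrib, neg_mul]

lemma integrable_exp_neg_sum_mul_sq (hc : ∀ i, 0 < c i) :
    Integrable fun y : ι → ℝ => exp (-∑ i, c i * y i ^ 2) := by
  simp only [exp_neg_sum_mul_sq]
  exact Integrable.fintype_prod (μ := fun _ => (volume : Measure ℝ))
    fun i => integrable_exp_neg_mul_sq (hc i)

variable [DecidableEq ι]

lemma sq_mul_exp_neg_sum_mul_sq (c y : ι → ℝ) (k : ι) :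
    y k ^ 2 * exp (-∑ i, c i * y i ^ 2) =
      ∏ i, (if i = k then y i ^ 2 else 1) * exp (-c i * y i ^ 2) := by
  rw [Finset.prod_mul_distrib, Finset.prod_ite_eq' Finset.univ k, if_pos (Finset.mem_univ k),
    exp_neg_sum_mul_sq]

lemma integrable_sq_mul_exp_neg_sum_mul_sq (hc : ∀ i, 0 < c i) (k : ι) :
    Integrable fun y : ι → ℝ => y k ^ 2 * exp (-∑ i, c i * y i ^ 2) := by
  simp_rw [sq_mul_exp_neg_sum_mul_sq c _ k]
  refine Integrable.fintype_prod (μ := fun _ => (volume : Measure ℝ))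
    (f := fun i t => (if i = k then t ^ 2 else 1) * exp (-c i * t ^ 2)) fun i => ?_
  split_ifs
  · exact integrable_sq_mul_exp_neg_mul_sq (hc i)
  · simpa only [one_mul] using integrable_exp_neg_mul_sq (hc i)

lemma integral_sq_mul_exp_neg_sum_mul_sq (hc : ∀ i, 0 < c i) (k : ι) :
    ∫ y : ι → ℝ, y k ^ 2 * exp (-∑ i, c i * y i ^ 2) = (∏ i, √(π / c i)) / (2 * c k) := by
  have hfactor : ∀ i, ∫ t : ℝ, (if i = k then t ^ 2 else 1) * exp (-c i * t ^ 2) =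
      (if i = k then (2 * c i)⁻¹ else 1) * √(π / c i) := by
    intro i
    split_ifs
    · rw [integral_sq_mul_exp_neg_mul_sq (hc i), div_eq_inv_mul]
    · simp only [one_mul, integral_gaussian]
  simp_rw [sq_mul_exp_neg_sum_mul_sq c _ k]
  rw [integral_fintype_prod_volume_eq_prod
      (fun i t => (if i = k then t ^ 2 else 1) * exp (-c i * t ^ 2)),
    Finset.prod_congr rfl fun i _ => hfactor i, Finset.prod_mul_distrib,
    Finset.prod_ite_eq' Finset.univ k, if_pos (Finset.mem_univ k)]
  ring

end Weighted

lemma integral_comp_linearMap_of_abs_det_eq_one {E F : Type*} [NormedAddCommGroup E]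
    [NormedSpace ℝ E] [MeasurableSpace E] [BorelSpace E] [FiniteDimensional ℝ E]
    [NormedAddCommGroup F] [NormedSpace ℝ F] (μ : Measure E) [μ.IsAddHaarMeasure]
    {L : E →ₗ[ℝ] E} (hL : |LinearMap.det L| = 1) {f : E → F} (hf : AEStronglyMeasurable f μ) :
    ∫ x, f (L x) ∂μ = ∫ x, f x ∂μ := by
  have hdet : LinearMap.det L ≠ 0 := by
    intro h; simp [h] at hL
  have hmap : μ.map L = μ := by
    rw [Measure.map_linearMap_addHaar_eq_smul_addHaar μ hdet, abs_inv, hL, inv_one,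
      ENNReal.ofReal_one, one_smul]
  rw [← integral_map L.continuous_of_finiteDimensional.aemeasurable (hmap.symm ▸ hf), hmap]

namespace LatticeSum

variable {ι : Type*} {h : ℝ}

lemma floor_div_eq_iff (hh : 0 < h) {t : ℝ} {k : ℤ} :
    ⌊t / h⌋ = k ↔ t ∈ Ico (k * h) ((k + 1) * h) := by
  rw [Int.floor_eq_iff, le_div_iff₀ hh, div_lt_iff₀ hh, mem_Ico]

def cell (h : ℝ) (p : ι → ℤ) : Set (ι → ℝ) :=
  univ.pi fun i => Ico (p i * h) ((p i + 1) * h)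

noncomputable def latticeFloor (h : ℝ) (x : ι → ℝ) : ι → ℝ :=
  h • fun i => (⌊x i / h⌋ : ℝ)

lemma mem_cell_iff (hh : 0 < h) {p : ι → ℤ} {x : ι → ℝ} :
    x ∈ cell h p ↔ (fun i => ⌊x i / h⌋) = p := by
  simp only [cell, mem_univ_pi, ← floor_div_eq_iff hh, funext_iff]

lemma measurableSet_cell [Countable ι] (h : ℝ) (p : ι → ℤ) : MeasurableSet (cell h p) :=
  MeasurableSet.univ_pi fun _ => measurableSet_Ico

lemma measureReal_cell [Fintype ι] (hh : 0 < h) (p : ι → ℤ) :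
    volume.real (cell h p) = h ^ Fintype.card ι := by
  simp [cell, measureReal_def, volume_pi_pi, Real.volume_Ico, add_mul, hh.le]

lemma pairwise_disjoint_cell (hh : 0 < h) : Pairwise (Disjoint on cell (ι := ι) h) := by
  intro p q hpq
  refine Set.disjoint_left.2 fun x hp hq => hpq ?_
  rw [← (mem_cell_iff hh).1 hp, ← (mem_cell_iff hh).1 hq]

lemma iUnion_cell (hh : 0 < h) : ⋃ p, cell (ι := ι) h p = univ :=
  eq_univ_of_forall fun _ => mem_iUnion.2 ⟨_, (mem_cell_iff hh).2 rfl⟩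

lemma latticeFloor_of_mem_cell (hh : 0 < h) {p : ι → ℤ} {x : ι → ℝ} (hx : x ∈ cell h p) :
    latticeFloor h x = h • fun i => (p i : ℝ) := by
  rw [latticeFloor, ← (mem_cell_iff hh).1 hx]

lemma measurable_latticeFloor (h : ℝ) : Measurable (latticeFloor (ι := ι) h) :=
  (measurable_pi_lambda _ fun i =>
    measurable_from_top.comp ((measurable_pi_apply i).div_const h).floor).const_smul h

lemma latticeFloor_apply_mem_Ioc (hh : 0 < h) (x : ι → ℝ) (i : ι) :
    latticeFloor h x i ∈ Ioc (x i - h) (x i) := by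
  have := Int.sub_floor_div_mul_nonneg (x i) hh
  have := Int.sub_floor_div_mul_lt (x i) hh
  simp only [latticeFloor, Pi.smul_apply, smul_eq_mul, mem_Ioc]
  constructor <;> linarith

lemma integral_comp_latticeFloor [Fintype ι] (hh : 0 < h) {f : (ι → ℝ) → ℝ}
    (hf : Integrable fun x => f (latticeFloor h x)) :
    ∫ x, f (latticeFloor h x) = h ^ Fintype.card ι * ∑' p : ι → ℤ, f (h • fun i => (p i : ℝ)) := by
  rw [← setIntegral_univ, ← iUnion_cell hh,
    integral_iUnion (measurableSet_cell h) (pairwise_disjoint_cell hh) hf.integrableOn,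
    ← tsum_mul_left]
  refine tsum_congr fun p => ?_
  rw [setIntegral_congr_fun (measurableSet_cell h p) fun x hx => congrArg f
      (latticeFloor_of_mem_cell hh hx), setIntegral_const, measureReal_cell hh, smul_eq_mul]

lemma tendsto_latticeFloor (x : ι → ℝ) :
    Tendsto (fun h => latticeFloor h x) (𝓝[>] 0) (𝓝 x) := by
  refine tendsto_pi_nhds.2 fun i => ?_
  have hlow : Tendsto (fun h => x i - h) (𝓝[>] 0) (𝓝 (x i)) :=
    ((by fun_prop : Continuous fun h : ℝ => x i - h).tendsto' 0 (x i) (sub_zero _)).mono_left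
      nhdsWithin_le_nhds
  refine tendsto_of_tendsto_of_tendsto_of_le_of_le' hlow tendsto_const_nhds ?_ ?_
  · filter_upwards [self_mem_nhdsWithin] with h hh using (latticeFloor_apply_mem_Ioc hh x i).1.le
  · filter_upwards [self_mem_nhdsWithin] with h hh using (latticeFloor_apply_mem_Ioc hh x i).2

lemma sum_sq_le_two_mul_sum_sq_latticeFloor_add_card [Fintype ι] (hh : 0 < h) (h1 : h ≤ 1)
    (x : ι → ℝ) :
    ∑ i, x i ^ 2 ≤ 2 * ∑ i, latticeFloor h x i ^ 2 + 2 * Fintype.card ι := by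
  calc ∑ i, x i ^ 2 ≤ ∑ i, (2 * latticeFloor h x i ^ 2 + 2) := Finset.sum_le_sum fun i _ => ?_
    _ = _ := by simp [Finset.sum_add_distrib, Finset.mul_sum, mul_comm]
  obtain ⟨hlow, hup⟩ := latticeFloor_apply_mem_Ioc hh x i
  nlinarith [sq_nonneg (x i - 2 * latticeFloor h x i)]

theorem tendsto_pow_card_mul_tsum_integral [Fintype ι] {f : (ι → ℝ) → ℝ} (hf : Continuous f)
    {C c : ℝ} (hc : 0 < c) (hfC : ∀ y, |f y| ≤ C * exp (-c * ∑ i, y i ^ 2)) :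
    Tendsto (fun h => h ^ Fintype.card ι * ∑' p : ι → ℤ, f (h • fun i => (p i : ℝ)))
      (𝓝[>] 0) (𝓝 (∫ x, f x)) := by
  have hC : 0 ≤ C := nonneg_of_mul_nonneg_left ((abs_nonneg _).trans (hfC 0)) (exp_pos _)
  set bound : (ι → ℝ) → ℝ := fun x => C * exp (c * Fintype.card ι) * exp (-∑ i, c / 2 * x i ^ 2)
  have hbound_int : Integrable bound :=
    (integrable_exp_neg_sum_mul_sq fun _ => half_pos hc).const_mul _
  have hmeas : ∀ h, AEStronglyMeasurable fun x => f (latticeFloor h x) :=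
    fun h => (hf.measurable.comp (measurable_latticeFloor h)).aestronglyMeasurable
  have hle : ∀ h ∈ Ioc (0 : ℝ) 1, ∀ x, ‖f (latticeFloor h x)‖ ≤ bound x := by
    intro h hh x
    have hsq := sum_sq_le_two_mul_sum_sq_latticeFloor_add_card hh.1 hh.2 x
    calc ‖f (latticeFloor h x)‖ ≤ C * exp (-c * ∑ i, latticeFloor h x i ^ 2) :=
          (norm_eq_abs _).trans_le (hfC _)
      _ ≤ C * exp (c * Fintype.card ι) * exp (-∑ i, c / 2 * x i ^ 2) := by
        rw [mul_assoc, ← exp_add, ← Finset.mul_sum]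
        gcongr
        nlinarith
  have hlim : Tendsto (fun h => ∫ x, f (latticeFloor h x)) (𝓝[>] 0) (𝓝 (∫ x, f x)) :=
    tendsto_integral_filter_of_dominated_convergence bound (.of_forall hmeas)
      (eventually_of_mem (Ioc_mem_nhdsGT one_pos) fun h hh => .of_forall (hle h hh)) hbound_int
      (.of_forall fun x => (hf.tendsto x).comp (tendsto_latticeFloor x))
  refine hlim.congr' (eventually_of_mem (Ioc_mem_nhdsGT one_pos) fun h hh => ?_)
  exact integral_comp_latticeFloor hh.1 (hbound_int.mono' (hmeas h) (.of_forall (hle h hh)))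

end LatticeSum

noncomputable def halfHadamard : Matrix (Fin 4) (Fin 4) ℝ :=
  (1 / 2 : ℝ) • !![1, 1, 1, 1; 1, -1, 1, -1; 1, 1, -1, -1; 1, -1, -1, 1]

lemma halfHadamard_transpose_mul_self : halfHadamardᵀ * halfHadamard = 1 := by
  ext i j
  fin_cases i <;> fin_cases j <;> simp [halfHadamard, Matrix.mul_apply, Fin.sum_univ_four] <;>
    norm_num

lemma abs_det_halfHadamard : |halfHadamard.det| = 1 := by
  have h := congrArg Matrix.det halfHadamard_transpose_mul_self
  rw [Matrix.det_mul, Matrix.det_transpose, Matrix.det_one, ← sq] at h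
  rwa [← pow_eq_one_iff_of_nonneg (abs_nonneg _) two_ne_zero, sq_abs]

lemma halfHadamard_mulVec (y : Fin 4 → ℝ) :
    halfHadamard *ᵥ y = ![(y 0 + y 1 + y 2 + y 3) / 2, (y 0 - y 1 + y 2 - y 3) / 2,
      (y 0 + y 1 - y 2 - y 3) / 2, (y 0 - y 1 - y 2 + y 3) / 2] := by
  ext i
  fin_cases i <;> simp [halfHadamard, Matrix.mulVec, dotProduct, Fin.sum_univ_four] <;> ring

lemma sum_halfHadamard_mulVec (y : Fin 4 → ℝ) : ∑ i, (halfHadamard *ᵥ y) i = 2 * y 0 := by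
  simp only [halfHadamard_mulVec, Fin.sum_univ_four, Matrix.cons_val_zero, Matrix.cons_val_one,
    Matrix.cons_val]
  ring

lemma sum_sq_halfHadamard_mulVec (y : Fin 4 → ℝ) :
    ∑ i, (halfHadamard *ᵥ y) i ^ 2 = ∑ i, y i ^ 2 := by
  simp only [halfHadamard_mulVec, Fin.sum_univ_four, Matrix.cons_val_zero, Matrix.cons_val_one,
    Matrix.cons_val]
  ring

def pairSum (x : Fin 4 → ℝ) : ℝ :=
  ∑ i, ∑ j, if i < j then x i * x j else 0

def quadForm (x : Fin 4 → ℝ) : ℝ :=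
  ∑ i, x i ^ 2 + (∑ i, x i) ^ 2

noncomputable def tauGaussian (x : Fin 4 → ℝ) : ℝ :=
  pairSum x * exp (-quadForm x)

lemma pairSum_eq (x : Fin 4 → ℝ) : pairSum x = ((∑ i, x i) ^ 2 - ∑ i, x i ^ 2) / 2 := by
  simp only [pairSum, Fin.sum_univ_four, Fin.reduceLT, Fin.lt_one_iff, not_lt_zero,
    lt_self_iff_false, Fin.reduceEq, one_ne_zero, ↓reduceIte]
  ring

lemma pairSum_smul (a : ℝ) (x : Fin 4 → ℝ) : pairSum (a • x) = a ^ 2 * pairSum x := by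
  simp only [pairSum_eq, Pi.smul_apply, smul_eq_mul, mul_pow, ← Finset.mul_sum]
  ring

lemma quadForm_smul (a : ℝ) (x : Fin 4 → ℝ) : quadForm (a • x) = a ^ 2 * quadForm x := by
  simp only [quadForm, Pi.smul_apply, smul_eq_mul, mul_pow, ← Finset.mul_sum]
  ring

lemma tauGaussian_smul (a : ℝ) (x : Fin 4 → ℝ) :
    tauGaussian (a • x) = a ^ 2 * (pairSum x * exp (-a ^ 2 * quadForm x)) := by
  rw [tauGaussian, pairSum_smul, quadForm_smul, neg_mul, mul_assoc]

lemma continuous_tauGaussian : Continuous tauGaussian := by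
  refine Continuous.congr (f := fun x => ((∑ i, x i) ^ 2 - ∑ i, x i ^ 2) / 2 * exp (-quadForm x))
    (by unfold quadForm; fun_prop) fun x => ?_
  rw [tauGaussian, pairSum_eq]

lemma abs_pairSum_le (x : Fin 4 → ℝ) : |pairSum x| ≤ 3 / 2 * ∑ i, x i ^ 2 := by
  have hcs : (∑ i, x i) ^ 2 ≤ 4 * ∑ i, x i ^ 2 := by
    simpa using sq_sum_le_card_mul_sum_sq (s := Finset.univ) (f := x)
  rw [abs_le, pairSum_eq]
  constructor <;> linarith [sq_nonneg (∑ i, x i)]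

lemma abs_tauGaussian_le (x : Fin 4 → ℝ) :
    |tauGaussian x| ≤ 3 * exp (-(1 / 2) * ∑ i, x i ^ 2) := by
  set t := ∑ i, x i ^ 2
  have ht : 0 ≤ t := by positivity
  have hQ : t ≤ quadForm x := le_add_of_nonneg_right (sq_nonneg _)
  have hdecay : t / 2 * exp (-(t / 2)) ≤ 1 := (mul_exp_neg_le_exp_neg_one _).trans (by simp)
  calc |tauGaussian x| ≤ 3 / 2 * t * exp (-t) := by
        rw [tauGaussian, abs_mul, abs_exp]
        gcongr
        exact abs_pairSum_le x
    _ = 3 * (t / 2 * exp (-(t / 2))) * exp (-(1 / 2) * t) := by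
        rw [show -t = -(t / 2) + -(1 / 2) * t by ring, exp_add]
        ring
    _ ≤ 3 * exp (-(1 / 2) * t) := by
        gcongr
        linarith

lemma tauGaussian_halfHadamard_mulVec (y : Fin 4 → ℝ) :
    tauGaussian (halfHadamard *ᵥ y) =
      2 * (y 0 ^ 2 * exp (-∑ i, ![5, 1, 1, 1] i * y i ^ 2)) -
        1 / 2 * ∑ k, y k ^ 2 * exp (-∑ i, ![5, 1, 1, 1] i * y i ^ 2) := by
  have hexp : ∑ i, ![5, 1, 1, 1] i * y i ^ 2 = ∑ i, y i ^ 2 + (2 * y 0) ^ 2 := by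
    simp only [Fin.sum_univ_four, Matrix.cons_val_zero, Matrix.cons_val_one, Matrix.cons_val,
      one_mul]
    ring
  rw [tauGaussian, pairSum_eq, quadForm, sum_halfHadamard_mulVec, sum_sq_halfHadamard_mulVec,
    ← Finset.sum_mul, hexp]
  ring

lemma integral_tauGaussian : ∫ x, tauGaussian x = -(3 * π ^ 2) / (5 * √5) := by
  have hc : ∀ i, 0 < ![(5 : ℝ), 1, 1, 1] i := by
    intro i; fin_cases i <;> norm_num
  rw [← integral_comp_linearMap_of_abs_det_eq_one volume
    (by rw [LinearMap.det_toLin', abs_det_halfHadamard])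
    continuous_tauGaussian.aestronglyMeasurable]
  simp_rw [Matrix.toLin'_apply, tauGaussian_halfHadamard_mulVec]
  have hint := integrable_sq_mul_exp_neg_sum_mul_sq hc
  rw [integral_sub ((hint 0).const_mul _)
      ((integrable_finsetSum _ fun k _ => hint k).const_mul _), integral_const_mul,
    integral_const_mul, integral_finsetSum _ fun k _ => hint k]
  simp_rw [integral_sq_mul_exp_neg_sum_mul_sq hc]
  simp only [Fin.prod_univ_four, Fin.sum_univ_four, Matrix.cons_val_zero, Matrix.cons_val_one,
    Matrix.cons_val, sqrt_div', div_one, Nat.ofNat_nonneg]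
  have hπ : √π ^ 4 = π ^ 2 := by rw [show 4 = 2 * 2 from rfl, pow_mul, sq_sqrt pi_pos.le]
  field_simp
  rw [hπ]
  ring

/-- With `τ(p) = ∑_{i<j} p_i p_j`,
`lim_{α→0⁺} α³ · ∑_{p∈ℤ⁴} τ(p) · e^{-α(|p|² + σ(p)²)} = −3π²/(5√5)`. -/
theorem stmt7 :
    Tendsto (fun α : ℝ =>
      α ^ 3 * ∑' p : Fin 4 → ℤ,
        (∑ i : Fin 4, ∑ j : Fin 4, if i < j then (p i : ℝ) * (p j : ℝ) else 0) *
          Real.exp (-α * ((∑ i, (p i : ℝ) ^ 2) + (∑ i, (p i : ℝ)) ^ 2)))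
      (nhdsWithin 0 (Set.Ioi 0)) (nhds (-(3 * Real.pi ^ 2) / (5 * Real.sqrt 5))) := by
  have hsqrt : Tendsto (fun α : ℝ => √α) (𝓝[>] 0) (𝓝[>] 0) :=
    tendsto_nhdsWithin_iff.2 ⟨(continuous_sqrt.tendsto' 0 0 sqrt_zero).mono_left
      nhdsWithin_le_nhds, eventually_nhdsWithin_of_forall fun _ => sqrt_pos.2⟩
  have hlim := (LatticeSum.tendsto_pow_card_mul_tsum_integral continuous_tauGaussian
    one_half_pos abs_tauGaussian_le).comp hsqrt
  rw [integral_tauGaussian, Fintype.card_fin] at hlim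
  refine hlim.congr' (eventually_nhdsWithin_of_forall fun α (hα_pos : 0 < α) => ?_)
  have hα : √α ^ 2 = α := sq_sqrt hα_pos.le
  simp only [comp_apply, tauGaussian_smul, hα]
  rw [tsum_mul_left, ← mul_assoc, show √α ^ 4 * α = α ^ 3 by
    rw [show √α ^ 4 = (√α ^ 2) ^ 2 by ring, hα]; ring]
  rfl
end
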